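/- Let d ≥ 2 and let F_d be the d×d matrix with F_d(1,1) = F_d(1,d) = 1, F_d(i,i-1) = 1 for 2 ≤ i ≤ d, and zeros elsewhere. Then for every j ≥ 1, the entries of F_d^j are given by (F_d^j)(r,s) = S_d(j - d + 2 - r - [s ≥ 2](d - s)) in the following explicit sense: the first column of F_d^j is (S_d(j-d+1), S_d(j-d), …, S_d(j-2d+2))^T and for 2 ≤ s ≤ d the s-th column is (S_d(j-2d+s), S_d(j-2d+s-1), …, S_d(j-3d+s+1))^T, where S_d is the extended cutting time sequence. -/
import Mathlib


def cutS (d : ℕ) : ℕ → ℕ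
  | k => if _h : k ≤ d ∨ d < 2 then k + 1 else cutS d (k - 1) + cutS d (k - d)
decreasing_by all_goals omega

/-- Auxiliary sequence defining the extension of the cutting times to negative
indices: \`eAux d n\` corresponds to \`S_d(n - (3d-3))\`. -/
def eAux (d : ℕ) : ℕ → ℤ
  | n =>
    if d < 2 then 0
    else if n < d - 2 then 0
    else if n = d - 2 then 1
    else if n = d - 1 then 0
    else eAux d (n - 1) + eAux d (n - d)
decreasing_by all_goals omega

/-- The cutting time sequence extended to negative indices: for \`k ≥ 0\` it agrees
with \`cutS d\`, for \`-(3d-3) ≤ k < 0\` it is given by the base values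
\`S_d(-2d+2)=0\`, \`S_d(-2d+1)=1\`, \`S_d(m)=0\` for \`-3d+3 ≤ m ≤ -2d\`, together with the
recurrence \`S_d(k)=S_d(k-1)+S_d(k-d)\` (which determines the values for
\`-2d+3 ≤ k ≤ -1\`), and it is \`0\` for \`k < -(3d-3)\`. -/
def cutSext (d : ℕ) (k : ℤ) : ℤ :=
  if 0 ≤ k then (cutS d k.toNat : ℤ)
  else if k < -(3 * (d : ℤ) - 3) then 0
  else eAux d (k + (3 * (d : ℤ) - 3)).toNat

def Fmat (d : ℕ) : Matrix (Fin d) (Fin d) ℤ :=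
  Matrix.of fun i j =>
    if ((i : ℕ) = 0 ∧ (j : ℕ) = 0) ∨ ((i : ℕ) = 0 ∧ (j : ℕ) = d - 1) ∨ ((j : ℕ) + 1 = (i : ℕ))
    then 1 else 0


lemma eAux_small {d : ℕ} (hd : 2 ≤ d) : ∀ n : ℕ, n ≤ 3*d-4 →
    eAux d n = if n = d-2 ∨ 2*d-2 ≤ n then 1 else 0 := by
  intro n
  induction n using Nat.strong_induction_on with
  | _ n ih =>
    intro hn
    rw [eAux]
    rcases le_or_gt d n with h | h
    · rw [if_neg (by omega), if_neg (by omega), if_neg (by omega), if_neg (by omega),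
        ih (n-1) (by omega) (by omega), ih (n-d) (by omega) (by omega)]
      split_ifs <;> omega
    · rw [if_neg (by omega)]
      split_ifs <;> omega

lemma cutS_small {d k : ℕ} (hk : k ≤ d) : cutS d k = k + 1 := by
  rw [cutS, dif_pos (Or.inl hk)]

lemma cutS_rec {d k : ℕ} (hd : 2 ≤ d) (hk : d < k) :
    cutS d k = cutS d (k - 1) + cutS d (k - d) := by
  rw [cutS, dif_neg (by omega)]

lemma cutSext_nonpos {d : ℕ} (hd : 2 ≤ d) {k : ℤ} (hk : k ≤ 0) :
    cutSext d k = if k = 1 - 2*(d:ℤ) ∨ 1 - (d:ℤ) ≤ k then 1 else 0 := by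
  unfold cutSext
  rcases eq_or_lt_of_le hk with h0 | h0
  · rw [if_pos (by omega)]
    have : k.toNat = 0 := by omega
    rw [this, cutS_small (by omega)]
    split_ifs <;> omega
  · rw [if_neg (by omega)]
    split_ifs with h1 h2 <;> try omega
    · rw [eAux_small hd _ (by omega)]
      split_ifs <;> omega
    · rw [eAux_small hd _ (by omega)]
      split_ifs <;> omega

lemma cutSext_small {d : ℕ} (hd : 2 ≤ d) {k : ℤ} (h0 : 0 ≤ k) (h1 : k ≤ d) :
    cutSext d k = k + 1 := by
  unfold cutSext
  rw [if_pos h0, cutS_small (by omega)]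
  omega

lemma cutSext_rec {d : ℕ} (hd : 2 ≤ d) {k : ℤ} (hk : 3 - 2*(d:ℤ) ≤ k) :
    cutSext d k = cutSext d (k - 1) + cutSext d (k - d) := by
  rcases le_or_gt ((d:ℤ) + 1) k with h | h
  · unfold cutSext
    rw [if_pos (by omega), if_pos (by omega), if_pos (by omega)]
    have h1 : (k - 1).toNat = k.toNat - 1 := by omega
    have h2 : (k - (d:ℤ)).toNat = k.toNat - d := by omega
    rw [h1, h2, cutS_rec hd (by omega)]
    push_cast
    ring
  · rcases le_or_gt k 0 with h0 | h0
    · rw [cutSext_nonpos hd h0, cutSext_nonpos hd (by omega), cutSext_nonpos hd (by omega)]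
      split_ifs <;> omega
    · rw [cutSext_small hd (by omega) (by omega), cutSext_small hd (by omega) (by omega),
        cutSext_nonpos hd (by omega), if_pos (by omega)]
      ring

lemma Fmat_mul_apply_succ {d : ℕ} (hd : 2 ≤ d) (M : Matrix (Fin d) (Fin d) ℤ)
    (r s : Fin d) (hr : 0 < (r : ℕ)) :
    (Fmat d * M) r s = M ⟨(r : ℕ) - 1, by omega⟩ s := by
  rw [Matrix.mul_apply]
  have key : ∀ k : Fin d, Fmat d r k * M k s
      = if k = (⟨(r : ℕ) - 1, by omega⟩ : Fin d) then M k s else 0 := by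
    intro k
    simp only [Fmat, Matrix.of_apply, Fin.ext_iff]
    split_ifs <;> simp_all <;> omega
  simp_rw [key]
  rw [Finset.sum_ite_eq' Finset.univ _ (fun k => M k s), if_pos (Finset.mem_univ _)]

lemma Fmat_mul_apply_zero {d : ℕ} (hd : 2 ≤ d) (M : Matrix (Fin d) (Fin d) ℤ)
    (r s : Fin d) (hr : (r : ℕ) = 0) :
    (Fmat d * M) r s = M ⟨0, by omega⟩ s + M ⟨d - 1, by omega⟩ s := by
  rw [Matrix.mul_apply]
  have key : ∀ k : Fin d, Fmat d r k * M k s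
      = (if k = (⟨0, by omega⟩ : Fin d) then M k s else 0)
        + (if k = (⟨d - 1, by omega⟩ : Fin d) then M k s else 0) := by
    intro k
    simp only [Fmat, Matrix.of_apply, Fin.ext_iff]
    split_ifs <;> simp_all <;> omega
  simp_rw [key]
  rw [Finset.sum_add_distrib,
    Finset.sum_ite_eq' Finset.univ _ (fun k => M k s), if_pos (Finset.mem_univ _),
    Finset.sum_ite_eq' Finset.univ _ (fun k => M k s), if_pos (Finset.mem_univ _)]

theorem powers_of_Fmat (d : ℕ) (hd : 2 ≤ d) (j : ℕ) (hj : 1 ≤ j) (r s : Fin d) :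
    (Fmat d ^ j) r s =
      if (s : ℕ) = 0 then cutSext d ((j : ℤ) - d + 1 - (r : ℕ))
      else cutSext d ((j : ℤ) - 2 * d + (s : ℕ) + 1 - (r : ℕ)) := by
  induction j, hj using Nat.le_induction generalizing r with
  | base =>
    rw [pow_one]
    have hr := r.isLt
    have hs := s.isLt
    simp only [Fmat, Matrix.of_apply]
    rw [show ((1:ℕ):ℤ) - d + 1 - (r:ℕ) = ((2:ℤ) - d - r) by push_cast; ring]
    rw [cutSext_nonpos hd (by omega), cutSext_nonpos hd (by omega)]
    split_ifs <;> omega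
  | succ j hj ih =>
    rw [pow_succ']
    have hr := r.isLt
    have hs := s.isLt
    rcases Nat.eq_zero_or_pos (r : ℕ) with h0 | h0
    · rw [Fmat_mul_apply_zero hd _ r s h0, ih ⟨0, by omega⟩, ih ⟨d-1, by omega⟩]
      simp only [Fin.val_mk]
      split_ifs with hs0
      · rw [cutSext_rec hd (k := ((j+1:ℕ):ℤ) - d + 1 - (r:ℕ)) (by push_cast; omega)]
        congr 1 <;> congr 1 <;> push_cast <;> omega
      · rw [cutSext_rec hd (k := ((j+1:ℕ):ℤ) - 2*d + (s:ℕ) + 1 - (r:ℕ)) (by push_cast; omega)]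
        congr 1 <;> congr 1 <;> push_cast <;> omega
    · rw [Fmat_mul_apply_succ hd _ r s h0, ih ⟨(r:ℕ)-1, by omega⟩]
      simp only [Fin.val_mk]
      split_ifs
      · congr 1; push_cast; omega
      · congr 1; push_cast; omega
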